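/- For every integer N ≥ 1, H*(U_{N+1}) > H*(U_N), where U_N denotes the uniform distribution on an alphabet of size N. Equivalently, the map N ↦ (1/2)·log₂( 4 (1/N)^{1/N} / (1/N + 1)^{1/N + 1} ) is strictly increasing in N. -/

import Mathlib

/-- Lin entropy of a distribution on a finite alphabet. -/
noncomputable def linEntropy {X : Type*} [Fintype X] (p : X → ℝ) : ℝ :=
  ∑ x, p x * ((1 / 2) * Real.logb 2 (4 * p x ^ p x / (p x + 1) ^ (p x + 1)))

/-!
Write `H*(p) = Σ p(x) h(p(x))` with `h(p) = 1 + (p log p - (p+1) log (p+1)) / (2 log 2)`. On the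
uniform distribution `H*(U_N) = h(1/N)`, and `p log p - (p+1) log (p+1)` has derivative
`log p - log (p+1) < 0`, so `h` is strictly decreasing and `h(1/(N+1)) > h(1/N)`.
-/

open Real Set

noncomputable def linInfo (p : ℝ) : ℝ :=
  (1 / 2) * logb 2 (4 * p ^ p / (p + 1) ^ (p + 1))

theorem linEntropy_eq_sum_mul_linInfo {X : Type*} [Fintype X] (p : X → ℝ) :
    linEntropy p = ∑ x, p x * linInfo (p x) :=
  rfl

theorem linEntropy_uniform (X : Type*) [Fintype X] [Nonempty X] :
    linEntropy (fun _ : X => (1 : ℝ) / Fintype.card X) = linInfo (1 / Fintype.card X) := by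
  have hcard : (Fintype.card X : ℝ) ≠ 0 := Nat.cast_ne_zero.mpr Fintype.card_ne_zero
  rw [linEntropy_eq_sum_mul_linInfo, Finset.sum_const, Finset.card_univ, nsmul_eq_mul,
    ← mul_assoc, mul_one_div_cancel hcard, one_mul]

theorem strictAntiOn_mul_log_sub_add_one_mul_log_add_one :
    StrictAntiOn (fun x : ℝ => x * log x - (x + 1) * log (x + 1)) (Ici 0) := by
  have hcont : Continuous fun x : ℝ => x * log x := continuous_mul_log
  refine strictAntiOn_of_hasDerivWithinAt_neg (convex_Ici 0)
    (hcont.sub (hcont.comp (continuous_add_const 1))).continuousOn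
    (f' := fun x => log x - log (x + 1)) (fun x hx => ?_) (fun x hx => ?_)
  · rw [interior_Ici, mem_Ioi] at hx
    have hmul := hasDerivAt_mul_log hx.ne'
    have hshift := (hasDerivAt_mul_log (by linarith : x + 1 ≠ 0)).comp_add_const x 1
    rw [show log x - log (x + 1) = log x + 1 - (log (x + 1) + 1) by ring]
    exact (hmul.fun_sub hshift).hasDerivWithinAt
  · rw [interior_Ici, mem_Ioi] at hx
    exact sub_neg.mpr (log_lt_log hx (lt_add_one x))

theorem log_four_mul_rpow_div_rpow {p : ℝ} (hp : 0 < p) :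
    log (4 * p ^ p / (p + 1) ^ (p + 1)) = log 4 + (p * log p - (p + 1) * log (p + 1)) := by
  rw [log_div (by positivity) (by positivity), log_mul (by norm_num) (by positivity),
    log_rpow hp, log_rpow (by linarith)]
  ring

theorem linInfo_strictAntiOn : StrictAntiOn linInfo (Ioi 0) := by
  intro a ha b hb hab
  have hphi := strictAntiOn_mul_log_sub_add_one_mul_log_add_one
    (mem_Ici.mpr (le_of_lt ha)) (mem_Ici.mpr (le_of_lt hb)) hab
  have hlog : log (4 * b ^ b / (b + 1) ^ (b + 1)) < log (4 * a ^ a / (a + 1) ^ (a + 1)) := by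
    rw [log_four_mul_rpow_div_rpow ha, log_four_mul_rpow_div_rpow hb]
    linarith
  unfold linInfo logb
  gcongr

/-- Monotonicity under uniformity: Lin entropy of the uniform distribution is strictly
increasing in the alphabet size.  Equivalently, `N ↦ (1/2)·log₂(4 (1/N)^{1/N} / (1/N+1)^{1/N+1})`
is strictly increasing. -/
theorem linEntropy_uniform_strictMono (N : ℕ) (hN : 1 ≤ N) :
    linEntropy (fun _ : Fin (N + 1) => (1 : ℝ) / (N + 1)) >
        linEntropy (fun _ : Fin N => (1 : ℝ) / N) ∧
      (1 / 2) * Real.logb 2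
          (4 * ((1 : ℝ) / (N + 1)) ^ ((1 : ℝ) / (N + 1)) /
            ((1 : ℝ) / (N + 1) + 1) ^ ((1 : ℝ) / (N + 1) + 1)) >
        (1 / 2) * Real.logb 2
          (4 * ((1 : ℝ) / N) ^ ((1 : ℝ) / N) /
            ((1 : ℝ) / N + 1) ^ ((1 : ℝ) / N + 1)) := by
  have hN0 : (0 : ℝ) < N := by exact_mod_cast hN
  have hlt : (1 : ℝ) / (N + 1) < 1 / N := one_div_lt_one_div_of_lt hN0 (lt_add_one _)
  have hinfo : linInfo (1 / (N + 1)) > linInfo (1 / N) :=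
    linInfo_strictAntiOn (mem_Ioi.mpr (by positivity)) (mem_Ioi.mpr (by positivity)) hlt
  have : NeZero N := ⟨by omega⟩
  have hsucc := linEntropy_uniform (Fin (N + 1))
  have hself := linEntropy_uniform (Fin N)
  simp only [Fintype.card_fin, Nat.cast_add, Nat.cast_one] at hsucc hself
  exact ⟨hsucc ▸ hself ▸ hinfo, hinfo⟩
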